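/- Let φ be a σ-semilinear self-adjoint autotopy of the cubic norm structure (J, N, ♯, T, 1) over K, let δ := N(φ(1)), and let γ ∈ K satisfy γ·σ(γ) = δ⁻¹. Define N̂(a) := γ⁻¹·N(a), a^{♯̂} := γ•(φ(a))♯, and T̂(a, b) := T(a, φ(b)). Then (J, N̂, ♯̂, T̂) is a hermitian cubic norm structure over K/F; that is, T̂ is hermitian (T̂(s•a, t•b) = s·σ(t)·T̂(a,b) and σ(T̂(a,b)) = T̂(b,a)), and for all t ∈ K, a, b ∈ J: (t•a)^{♯̂} = σ(t)²•a^{♯̂}, N̂(t•a) = t³·N̂(a), N̂(a+b) = N̂(a) + T̂(b, a^{♯̂}) + T̂(a, b^{♯̂}) + N̂(b), and (a^{♯̂})^{♯̂} = N̂(a)•a. -/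

import Mathlib

/-!
All axioms of the hermitian structure except the symmetry `σ(T̂(a,b)) = T̂(b,a)` follow from
`φ(φ(a)♯) = σ(δ)•a♯` (autotopy plus self-adjointness, `φ ∘ φ = U_z`) and `γ⁻¹ = σ(γ)σ(δ)`.
For the symmetry, write `T(a,b) = T(a,1)T(b,1) − T(a × b, 1)`, so only the action of `σ` on the
linear trace `T(·,1)` is needed. Evaluating `T(z♯, U_z(z × φ c))` once by moving `U_z` across `T`
and once by expanding `z × φ c = δ⁻¹ U_z(φ(1 × c))` gives `T(z♯, φ c) = δ σ(T(c,1))`, and from it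
`σ(T(φ b, 1)) = T(z, b)` and `σ(T(a × φ b, 1)) = σ(T(a,1)) T(z,b) − T(φ a, b)`.
-/

/-- A cubic norm structure over a commutative ring `K`. -/
structure CubicNormStructure (K : Type*) [CommRing K]
    (J : Type*) [AddCommGroup J] [Module K J] where
  N : J → K
  sharp : J → J
  T : J → J → K
  one : J
  one_ne_zero : one ≠ 0
  T_add_left : ∀ a b c : J, T (a + b) c = T a c + T b c
  T_smul_left : ∀ (t : K) (a b : J), T (t • a) b = t * T a b
  T_symm : ∀ a b : J, T a b = T b a
  sharp_smul : ∀ (t : K) (a : J), sharp (t • a) = t ^ 2 • sharp a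
  N_smul : ∀ (t : K) (a : J), N (t • a) = t ^ 3 * N a
  N_add : ∀ a b : J, N (a + b) = N a + T b (sharp a) + T a (sharp b) + N b
  sharp_sharp : ∀ a : J, sharp (sharp a) = N a • a
  sharp_one : sharp one = one
  one_cross : ∀ b : J, b = T b one • one - (sharp (one + b) - sharp one - sharp b)

namespace CubicNormStructure

variable {K : Type*} [CommRing K] {J : Type*} [AddCommGroup J] [Module K J]

/-- The linearization `a × b` of the adjoint map. -/
def cross (S : CubicNormStructure K J) (a b : J) : J :=
  S.sharp (a + b) - S.sharp a - S.sharp b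

/-- The `U`-operator `U_a(b) = T(a,b)•a − a♯ × b`. -/
def U (S : CubicNormStructure K J) (a b : J) : J :=
  S.T a b • a - S.cross (S.sharp a) b

end CubicNormStructure

/-- A hermitian (non-unital) cubic norm structure over `K/F`, with respect to
the conjugation `σ` of `K`. -/
structure HermCubicNormStructure (K : Type*) [CommRing K] (σ : K → K)
    (J : Type*) [AddCommGroup J] [Module K J] where
  N : J → K
  sharp : J → J
  T : J → J → K
  N_ne_zero : N ≠ 0
  T_add_left : ∀ a b c : J, T (a + b) c = T a c + T b c
  T_add_right : ∀ a b c : J, T a (b + c) = T a b + T a c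
  T_smul : ∀ (s t : K) (a b : J), T (s • a) (t • b) = s * σ t * T a b
  T_conj : ∀ a b : J, σ (T a b) = T b a
  sharp_smul : ∀ (t : K) (a : J), sharp (t • a) = (σ t) ^ 2 • sharp a
  N_smul : ∀ (t : K) (a : J), N (t • a) = t ^ 3 * N a
  N_add : ∀ a b : J, N (a + b) = N a + T b (sharp a) + T a (sharp b) + N b
  sharp_sharp : ∀ a : J, sharp (sharp a) = N a • a

namespace HermCubicNormStructure

variable {K : Type*} [CommRing K] {σ : K → K}
  {J : Type*} [AddCommGroup J] [Module K J]

/-- The (σ-semilinear) linearization `a × b` of the adjoint map. -/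
def cross (H : HermCubicNormStructure K σ J) (a b : J) : J :=
  H.sharp (a + b) - H.sharp a - H.sharp b

/-- The `U`-operator `U_a(b) = T(a,b)•a − a♯ × b`. -/
def U (H : HermCubicNormStructure K σ J) (a b : J) : J :=
  H.T a b • a - H.cross (H.sharp a) b

end HermCubicNormStructure

namespace CubicNormStructure

variable {K : Type*} [CommRing K] {J : Type*} [AddCommGroup J] [Module K J]

theorem nontrivial (S : CubicNormStructure K J) : Nontrivial K :=
  haveI : Nontrivial J := ⟨⟨S.one, 0, S.one_ne_zero⟩⟩
  Module.nontrivial K J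

variable (S : CubicNormStructure K J)

theorem T_add_right (a b c : J) : S.T a (b + c) = S.T a b + S.T a c := by
  rw [S.T_symm, S.T_add_left, S.T_symm b, S.T_symm c]

theorem T_smul_right (t : K) (a b : J) : S.T a (t • b) = t * S.T a b := by
  rw [S.T_symm, S.T_smul_left, S.T_symm b]

theorem T_sub_right (a b c : J) : S.T a (b - c) = S.T a b - S.T a c := by
  rw [eq_sub_iff_add_eq, ← T_add_right, sub_add_cancel]

theorem T_sub_left (a b c : J) : S.T (a - b) c = S.T a c - S.T b c := by
  rw [S.T_symm, T_sub_right, S.T_symm c, S.T_symm c]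

theorem sharp_add (a b : J) : S.sharp (a + b) = S.cross a b + S.sharp a + S.sharp b := by
  rw [cross]; abel

theorem cross_comm (a b : J) : S.cross a b = S.cross b a := by
  rw [cross, cross, add_comm a, sub_right_comm]

theorem T_cross_assoc (a b c : J) : S.T (S.cross a b) c = S.T a (S.cross b c) := by
  have habc := S.N_add (a + b) c
  have habc' := S.N_add a (b + c)
  rw [add_assoc, sharp_add, T_add_right, T_add_right, S.T_add_left] at habc
  rw [sharp_add, T_add_right, T_add_right, S.T_add_left] at habc'
  rw [S.T_symm]
  linear_combination habc' - habc + S.N_add b c - S.N_add a b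

theorem T_U_swap (a x y : J) : S.T (S.U a x) y = S.T x (S.U a y) := by
  rw [U, U, T_sub_left, S.T_smul_left, T_sub_right, T_smul_right, T_cross_assoc,
    S.T_symm x (S.cross _ y), T_cross_assoc, cross_comm S y, S.T_symm x a]
  ring

theorem cross_self (a : J) : S.cross a a = (2 : K) • S.sharp a := by
  rw [cross, ← two_smul K a, S.sharp_smul]
  module

theorem T_sharp_self (h2 : IsUnit (2 : K)) (a : J) : S.T a (S.sharp a) = 3 * S.N a :=
  h2.mul_left_cancel <| by
    have h := S.N_add a a
    rw [← two_smul K a, S.N_smul] at h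
    linear_combination -h

theorem cross_one (b : J) : S.cross S.one b = S.T b S.one • S.one - b := by
  nth_rw 3 [S.one_cross b]
  rw [cross]; abel

theorem T_eq_T_one_mul_sub (a b : J) :
    S.T a b = S.T a S.one * S.T b S.one - S.T (S.cross a b) S.one := by
  rw [T_cross_assoc, cross_comm S b, cross_one, T_sub_right, T_smul_right]
  ring

end CubicNormStructure

/-- Self-adjointness `φ⁻¹ ∘ U_z = φ` of the autotopy (`z = φ 1`) is encoded as `φ ∘ φ = U_z`. -/
structure IsSelfAdjointAutotopy {K : Type*} [CommRing K] {J : Type*} [AddCommGroup J]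
    [Module K J] (S : CubicNormStructure K J) (σ : K →+* K) (φ : J → J) : Prop where
  bijective : Function.Bijective φ
  map_add : ∀ a b : J, φ (a + b) = φ a + φ b
  map_smul : ∀ (t : K) (a : J), φ (t • a) = σ t • φ a
  isUnit_N : IsUnit (S.N (φ S.one))
  map_sharp : ∀ a : J,
    φ (S.sharp a) = Ring.inverse (S.N (φ S.one)) • S.U (φ S.one) (S.sharp (φ a))
  map_map : ∀ b : J, φ (φ b) = S.U (φ S.one) b

namespace IsSelfAdjointAutotopy

open CubicNormStructure

variable {K : Type*} [CommRing K] {J : Type*} [AddCommGroup J] [Module K J]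
  {S : CubicNormStructure K J} {σ : K →+* K} {φ : J → J}

theorem map_sub (hφ : IsSelfAdjointAutotopy S σ φ) (x y : J) : φ (x - y) = φ x - φ y :=
  (AddMonoidHom.mk' φ hφ.map_add).map_sub x y

theorem U_sub (hφ : IsSelfAdjointAutotopy S σ φ) (x y : J) :
    S.U (φ S.one) (x - y) = S.U (φ S.one) x - S.U (φ S.one) y := by
  rw [← hφ.map_map, ← hφ.map_map, ← hφ.map_map, hφ.map_sub, hφ.map_sub]

theorem U_sharp_map (hφ : IsSelfAdjointAutotopy S σ φ) (a : J) :
    S.U (φ S.one) (S.sharp (φ a)) = S.N (φ S.one) • φ (S.sharp a) := by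
  rw [hφ.map_sharp, smul_smul, Ring.mul_inverse_cancel _ hφ.isUnit_N, one_smul]

theorem U_sharp_one (hφ : IsSelfAdjointAutotopy S σ φ) :
    S.U (φ S.one) (S.sharp (φ S.one)) = S.N (φ S.one) • φ S.one := by
  rw [hφ.U_sharp_map, S.sharp_one]

theorem U_cross_map (hφ : IsSelfAdjointAutotopy S σ φ) (a b : J) :
    S.U (φ S.one) (S.cross (φ a) (φ b)) = S.N (φ S.one) • φ (S.cross a b) := by
  rw [cross, cross, ← hφ.map_add, hφ.U_sub, hφ.U_sub, hφ.U_sharp_map, hφ.U_sharp_map,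
    hφ.U_sharp_map, hφ.map_sub, hφ.map_sub, smul_sub, smul_sub]

theorem T_sharp_U (hφ : IsSelfAdjointAutotopy S σ φ) (x : J) :
    S.T (S.sharp (φ S.one)) (S.U (φ S.one) x) = S.N (φ S.one) * S.T (φ S.one) x := by
  rw [← T_U_swap, hφ.U_sharp_one, S.T_smul_left]

theorem T_sharp_map (hφ : IsSelfAdjointAutotopy S σ φ) (h2 : IsUnit (2 : K))
    (h3 : IsUnit (3 : K)) (c : J) :
    S.T (S.sharp (φ S.one)) (φ c) = S.N (φ S.one) * σ (S.T c S.one) := by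
  set z := φ S.one
  have hexpand : S.U z (S.cross z (φ c)) = (S.N z * σ (S.T c S.one)) • z - S.N z • φ c := by
    rw [hφ.U_cross_map, cross_one, hφ.map_sub, hφ.map_smul, smul_sub, smul_smul]
  have hmove :
      S.T (S.sharp z) (S.U z (S.cross z (φ c))) = S.N z * (2 * S.T (S.sharp z) (φ c)) := by
    rw [hφ.T_sharp_U, ← T_cross_assoc, S.cross_self, S.T_smul_left]
  rw [hexpand, T_sub_right, T_smul_right, T_smul_right, S.T_symm _ z, T_sharp_self S h2] at hmove
  exact (h3.mul hφ.isUnit_N).mul_left_cancel (by linear_combination -hmove)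

theorem conj_T_map_one (hφ : IsSelfAdjointAutotopy S σ φ) (h2 : IsUnit (2 : K))
    (h3 : IsUnit (3 : K)) (b : J) : σ (S.T (φ b) S.one) = S.T (φ S.one) b :=
  hφ.isUnit_N.mul_left_cancel <| by
    rw [← hφ.T_sharp_map h2 h3, hφ.map_map, hφ.T_sharp_U]

theorem conj_T_cross_map_one (hφ : IsSelfAdjointAutotopy S σ φ) (h2 : IsUnit (2 : K))
    (h3 : IsUnit (3 : K)) (a b : J) :
    σ (S.T (S.cross a (φ b)) S.one) = σ (S.T a S.one) * S.T (φ S.one) b - S.T (φ a) b := by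
  set z := φ S.one
  have hδ := hφ.isUnit_N
  refine (hδ.mul hδ).mul_left_cancel ?_
  have hcross : S.N z • φ (S.cross a (φ b)) = S.U z (S.cross (φ a) (S.U z b)) := by
    rw [← hφ.U_cross_map, hφ.map_map]
  have hexpand : S.U z (S.cross z (φ a)) = (S.N z * σ (S.T a S.one)) • z - S.N z • φ a := by
    rw [hφ.U_cross_map, cross_one, hφ.map_sub, hφ.map_smul, smul_sub, smul_smul]
  calc S.N z * S.N z * σ (S.T (S.cross a (φ b)) S.one)
      = S.T (S.sharp z) (S.N z • φ (S.cross a (φ b))) := by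
        rw [T_smul_right, hφ.T_sharp_map h2 h3, mul_assoc]
    _ = S.N z * S.T (S.U z (S.cross z (φ a))) b := by
        rw [hcross, hφ.T_sharp_U, ← T_cross_assoc, T_U_swap]
    _ = S.N z * S.N z * (σ (S.T a S.one) * S.T z b - S.T (φ a) b) := by
        rw [hexpand, T_sub_left, S.T_smul_left, S.T_smul_left]
        ring

theorem conj_T_map (hφ : IsSelfAdjointAutotopy S σ φ) (h2 : IsUnit (2 : K))
    (h3 : IsUnit (3 : K)) (a b : J) : σ (S.T a (φ b)) = S.T b (φ a) := by
  rw [T_eq_T_one_mul_sub S a, _root_.map_sub, map_mul, hφ.conj_T_map_one h2 h3,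
    hφ.conj_T_cross_map_one h2 h3, S.T_symm b]
  ring

theorem map_sharp_map (hφ : IsSelfAdjointAutotopy S σ φ) (hσ : Function.Involutive σ)
    (a : J) : φ (S.sharp (φ a)) = σ (S.N (φ S.one)) • S.sharp a := by
  have hinj : S.sharp a = σ (Ring.inverse (S.N (φ S.one))) • φ (S.sharp (φ a)) := by
    apply hφ.bijective.injective
    rw [hφ.map_smul, hσ, hφ.map_map, ← hφ.map_sharp]
  rw [hinj, smul_smul, ← map_mul, Ring.mul_inverse_cancel _ hφ.isUnit_N, map_one, one_smul]

noncomputable def toHerm (hφ : IsSelfAdjointAutotopy S σ φ) (hσ : Function.Involutive σ)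
    (h2 : IsUnit (2 : K)) (h3 : IsUnit (3 : K)) (γ : K)
    (hγ : γ * σ γ = Ring.inverse (S.N (φ S.one))) : HermCubicNormStructure K σ J := by
  have hγ_mul : γ * (σ γ * σ (S.N (φ S.one))) = 1 :=
    calc γ * (σ γ * σ (S.N (φ S.one))) = σ (γ * σ γ) * σ (S.N (φ S.one)) := by
          rw [map_mul, hσ]; ring
      _ = 1 := by rw [hγ, ← map_mul, Ring.inverse_mul_cancel _ hφ.isUnit_N, map_one]
  have hγ_unit : IsUnit γ := IsUnit.of_mul_eq_one _ hγ_mul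
  have hγ_inv : Ring.inverse γ = σ γ * σ (S.N (φ S.one)) := by
    rw [← Ring.inverse_mul_cancel_left γ (σ γ * σ (S.N (φ S.one))) hγ_unit, hγ_mul, mul_one]
  have hφ_sharp (a : J) : φ (γ • S.sharp (φ a)) = Ring.inverse γ • S.sharp a := by
    rw [hφ.map_smul, hφ.map_sharp_map hσ, smul_smul, hγ_inv]
  exact
  { N := fun a => Ring.inverse γ * S.N a
    sharp := fun a => γ • S.sharp (φ a)
    T := fun a b => S.T a (φ b)
    N_ne_zero := fun h =>
      haveI := S.nontrivial
      (hγ_unit.ringInverse.mul hφ.isUnit_N).ne_zero (congrFun h (φ S.one))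
    T_add_left := fun a b c => S.T_add_left a b (φ c)
    T_add_right := fun a b c => by simp only [hφ.map_add, T_add_right]
    T_smul := fun s t a b => by
      simp only [hφ.map_smul, S.T_smul_left, T_smul_right, mul_assoc]
    T_conj := hφ.conj_T_map h2 h3
    sharp_smul := fun t a => by
      simp only [hφ.map_smul, S.sharp_smul, smul_smul, mul_comm γ]
    N_smul := fun t a => by simp only [S.N_smul]; ring
    N_add := fun a b => by
      simp only [hφ_sharp, T_smul_right, S.N_add]; ring
    sharp_sharp := fun a => by
      simp only [hφ_sharp, S.sharp_smul, S.sharp_sharp, smul_smul]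
      congr 1
      linear_combination Ring.inverse γ * S.N a * Ring.mul_inverse_cancel γ hγ_unit }

end IsSelfAdjointAutotopy

theorem stmt15_general {F : Type*} [Field F] (h2 : (2 : F) ≠ 0) (h3 : (3 : F) ≠ 0)
    {K : Type*} [CommRing K] [Algebra F K]
    (σ : K ≃ₐ[F] K)
    (hσσ : ∀ t : K, σ (σ t) = t)
    {J : Type*} [AddCommGroup J] [Module K J]
    (S : CubicNormStructure K J)
    (φ : J → J)
    (hbij : Function.Bijective φ)
    (hadd : ∀ a b : J, φ (a + b) = φ a + φ b)
    (hsemi : ∀ (t : K) (a : J), φ (t • a) = σ t • φ a)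
    (hinv : IsUnit (S.N (φ S.one)))
    (haut : ∀ a : J, φ (S.sharp a) =
      Ring.inverse (S.N (φ S.one)) • S.U (φ S.one) (S.sharp (φ a)))
    (hself : ∀ b : J, φ (φ b) = S.U (φ S.one) b)
    (γ : K) (hγ : γ * σ γ = Ring.inverse (S.N (φ S.one))) :
    ∃ H : HermCubicNormStructure K (⇑σ) J,
      H.N = (fun a => Ring.inverse γ * S.N a) ∧
      H.sharp = (fun a => γ • S.sharp (φ a)) ∧
      H.T = (fun a b => S.T a (φ b)) := by
  have hφ : IsSelfAdjointAutotopy S (σ : K →+* K) φ := ⟨hbij, hadd, hsemi, hinv, haut, hself⟩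
  have h2K : IsUnit (2 : K) := by simpa only [map_ofNat] using h2.isUnit.map (algebraMap F K)
  have h3K : IsUnit (3 : K) := by simpa only [map_ofNat] using h3.isUnit.map (algebraMap F K)
  exact ⟨hφ.toHerm hσσ h2K h3K γ hγ, rfl, rfl, rfl⟩

/-- Theorem 4.6: a cubic norm structure over `K` together with a `σ`-semilinear
self-adjoint autotopy `φ` and `γ` with `γ·σ(γ) = δ⁻¹` yields a hermitian cubic
norm structure with `N̂(a) = γ⁻¹ N(a)`, `a^♯̂ = γ•φ(a)♯`, `T̂(a,b) = T(a, φ(b))`. -/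
theorem stmt15 {F : Type*} [Field F] (h2 : (2 : F) ≠ 0) (h3 : (3 : F) ≠ 0)
    {K : Type*} [CommRing K] [Algebra F K]
    (hdim : Module.finrank F K = 2)
    (hred : ∀ t : K, t * t = 0 → t = 0)
    (σ : K ≃ₐ[F] K)
    (hσσ : ∀ t : K, σ (σ t) = t)
    (hfix : ∀ t : K, σ t = t ↔ ∃ c : F, t = algebraMap F K c)
    {J : Type*} [AddCommGroup J] [Module K J]
    (S : CubicNormStructure K J)
    (φ : J → J)
    (hbij : Function.Bijective φ)
    (hadd : ∀ a b : J, φ (a + b) = φ a + φ b)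
    (hsemi : ∀ (t : K) (a : J), φ (t • a) = σ t • φ a)
    (hinv : IsUnit (S.N (φ S.one)))
    (haut : ∀ a : J, φ (S.sharp a) =
      Ring.inverse (S.N (φ S.one)) • S.U (φ S.one) (S.sharp (φ a)))
    (hself : ∀ b : J, φ (φ b) = S.U (φ S.one) b)
    (γ : K) (hγ : γ * σ γ = Ring.inverse (S.N (φ S.one))) :
    ∃ H : HermCubicNormStructure K (⇑σ) J,
      H.N = (fun a => Ring.inverse γ * S.N a) ∧
      H.sharp = (fun a => γ • S.sharp (φ a)) ∧
      H.T = (fun a b => S.T a (φ b)) :=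
  stmt15_general h2 h3 σ hσσ S φ hbij hadd hsemi hinv haut hself γ hγ
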